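/- Let T be a text, and fix a position r. Let j·d be the largest multiple of d smaller than r, and let L be the longest suffix of T[j·d-m+1 .. j·d] whose 2k-period is at most d. If a pattern P with |P| ≤ m has k-period at most d and HD(P, T[ℓ..r]) ≤ k with the occurrence ending at r (so ℓ = r-|P|+1), then the occurrence T[ℓ..r] is fully contained in L·T[j·d+1 .. r], i.e., ℓ > j·d - |L|. -/

import Mathlib

/-- Hamming distance between the length-`n` strings `X[0..n-1]` and `Y[0..n-1]`
(strings are given as functions `ℕ → α`). -/
def HDn {α : Type*} [DecidableEq α] (n : ℕ) (X Y : ℕ → α) : ℕ :=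
  hammingDist (fun i : Fin n => X i.val) (fun i : Fin n => Y i.val)

/-- `HD(S[ρ+1..n], S[1..n-ρ])`: Hamming distance between the length-`n` string
`S` shifted by `ρ` and itself. -/
def shiftHD {α : Type*} [DecidableEq α] (n : ℕ) (S : ℕ → α) (ρ : ℕ) : ℕ :=
  HDn (n - ρ) (fun i => S (ρ + i)) S

/-- The `k`-period of a length-`n` string `S`: the minimal `π > 0` with
`HD(S[π+1..n], S[1..n-π]) ≤ 2k`. -/
noncomputable def kPeriod {α : Type*} [DecidableEq α] (k n : ℕ) (S : ℕ → α) : ℕ :=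
  sInf {π | 0 < π ∧ shiftHD n S π ≤ 2 * k}

/-!
Let `λ = j·d - ℓ + 1` be the length of the part of the occurrence lying in `T[..j·d]`; if
the occurrence starts after `j·d` there is nothing to show. Otherwise `T[ℓ..j·d]` is a
length-`λ` prefix of a string at Hamming distance at most `k` from `P`, so every shift `ρ`
with `HD(P[ρ+1..], P) ≤ 2k` satisfies `HD(T[ℓ+ρ..j·d], T[ℓ..j·d-ρ]) ≤ 2k + 2k`. Hence
`T[ℓ..j·d]` has `2k`-period at most the `k`-period of `P`, which is at most `d`, and the
maximality of `L` gives `λ ≤ |L|`.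
-/

section HammingWindows

variable {α : Type*} [DecidableEq α]

lemma HDn_comm (n : ℕ) (X Y : ℕ → α) : HDn n X Y = HDn n Y X :=
  hammingDist_comm _ _

lemma HDn_triangle (n : ℕ) (X Y Z : ℕ → α) : HDn n X Z ≤ HDn n X Y + HDn n Y Z :=
  hammingDist_triangle _ _ _

lemma HDn_window_le {a b : ℕ} (c : ℕ) (h : a ≤ b - c) (X Y : ℕ → α) :
    HDn a (fun i => X (c + i)) (fun i => Y (c + i)) ≤ HDn b X Y := by
  unfold HDn hammingDist
  refine Finset.card_le_card_of_injOn (fun i : Fin a => (⟨c + i, by omega⟩ : Fin b)) ?_ ?_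
  · intro i hi
    simpa using hi
  · intro i _ i' _ hii
    exact Fin.ext (by simpa using congrArg Fin.val hii)

lemma HDn_mono {a b : ℕ} (h : a ≤ b) (X Y : ℕ → α) : HDn a X Y ≤ HDn b X Y := by
  simpa using HDn_window_le 0 (by omega) X Y

lemma shiftHD_mono {lam n : ℕ} (h : lam ≤ n) (S : ℕ → α) (ρ : ℕ) :
    shiftHD lam S ρ ≤ shiftHD n S ρ :=
  HDn_mono (by omega) _ _

lemma shiftHD_le_add (n : ℕ) (P S : ℕ → α) (ρ : ℕ) :
    shiftHD n S ρ ≤ shiftHD n P ρ + 2 * HDn n P S := by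
  have hshifted : HDn (n - ρ) (fun i => S (ρ + i)) (fun i => P (ρ + i)) ≤ HDn n P S := by
    rw [HDn_comm n P S]
    exact HDn_window_le ρ (by omega) S P
  have hprefix : HDn (n - ρ) P S ≤ HDn n P S := HDn_mono (by omega) P S
  calc shiftHD n S ρ
      ≤ HDn (n - ρ) (fun i => S (ρ + i)) (fun i => P (ρ + i))
        + HDn (n - ρ) (fun i => P (ρ + i)) S := HDn_triangle _ _ _ _
    _ ≤ HDn (n - ρ) (fun i => S (ρ + i)) (fun i => P (ρ + i))
        + (shiftHD n P ρ + HDn (n - ρ) P S) := by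
        gcongr
        exact HDn_triangle _ _ _ _
    _ ≤ shiftHD n P ρ + 2 * HDn n P S := by omega

end HammingWindows

section KPeriod

variable {α : Type*} [DecidableEq α]

lemma kPeriod_le {k n ρ : ℕ} {S : ℕ → α} (hρ : 0 < ρ) (h : shiftHD n S ρ ≤ 2 * k) :
    kPeriod k n S ≤ ρ :=
  Nat.sInf_le ⟨hρ, h⟩

/-- The defining set is never empty: `π = n + 1` leaves nothing to compare. -/
lemma kPeriod_mem (k n : ℕ) (S : ℕ → α) :
    0 < kPeriod k n S ∧ shiftHD n S (kPeriod k n S) ≤ 2 * k := by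
  refine Nat.sInf_mem (s := {π | 0 < π ∧ shiftHD n S π ≤ 2 * k}) ⟨n + 1, by omega, ?_⟩
  rw [shiftHD, show n - (n + 1) = 0 by omega]
  simp [HDn, hammingDist, Finset.univ_eq_empty]

lemma kPeriod_two_mul_le_of_HDn_le {k n lam : ℕ} {P S : ℕ → α} (hlam : lam ≤ n)
    (hPS : HDn n P S ≤ k) : kPeriod (2 * k) lam S ≤ kPeriod k n P := by
  obtain ⟨hρ, hshift⟩ := kPeriod_mem k n P
  refine kPeriod_le hρ ?_
  calc shiftHD lam S (kPeriod k n P)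
      ≤ shiftHD n S (kPeriod k n P) := shiftHD_mono hlam S _
    _ ≤ shiftHD n P (kPeriod k n P) + 2 * HDn n P S := shiftHD_le_add n P S _
    _ ≤ 2 * (2 * k) := by omega

end KPeriod

theorem stmt6_general {α : Type*} [DecidableEq α] (k d m j r len Llen : ℕ)
    (T P : ℕ → α)
    (hlenm : len ≤ m) (hm : m ≤ j * d)
    (hj1 : j * d < r)
    (hP : kPeriod k len P ≤ d)
    (hocc : HDn len P (fun i => T (r - len + 1 + i)) ≤ k)
    (hLmax : ∀ lam, lam ≤ m →
      kPeriod (2 * k) lam (fun i => T (j * d - lam + 1 + i)) ≤ d → lam ≤ Llen) :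
    j * d - Llen < r - len + 1 := by
  by_cases hinside : len ≤ r - j * d
  · omega
  set lam := len - (r - j * d)
  have hstart : j * d - lam = r - len := by omega
  have hperiodic : kPeriod (2 * k) lam (fun i => T (j * d - lam + 1 + i)) ≤ d := by
    rw [hstart]
    exact (kPeriod_two_mul_le_of_HDn_le (by omega) hocc).trans hP
  have := hLmax lam (by omega) hperiodic
  omega

/-- Fix a position `r` of the (1-indexed) text `T`, let `j·d` be the largest
multiple of `d` smaller than `r`, and let `L` (of length `Llen`) be the longest
suffix of `T[j·d-m+1 .. j·d]` whose `2k`-period is at most `d`. If a pattern `P`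
of length `len ≤ m` has `k`-period at most `d` and has a `k`-mismatch occurrence
`T[ℓ..r]` ending at `r` (so `ℓ = r - len + 1`), then the occurrence is fully
contained in `L · T[j·d+1 .. r]`, i.e. `ℓ > j·d - Llen`. -/
theorem stmt6 {α : Type*} [DecidableEq α] (k d m j r len Llen : ℕ)
    (T P : ℕ → α)
    (hd0 : 0 < d) (hlen0 : 0 < len) (hlenm : len ≤ m) (hm : m ≤ j * d)
    (hj1 : j * d < r) (hj2 : r ≤ j * d + d)
    (hP : kPeriod k len P ≤ d)
    (hocc : HDn len P (fun i => T (r - len + 1 + i)) ≤ k)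
    (hLlen : Llen ≤ m)
    (hLmax : ∀ lam, lam ≤ m →
      kPeriod (2 * k) lam (fun i => T (j * d - lam + 1 + i)) ≤ d → lam ≤ Llen) :
    j * d - Llen < r - len + 1 :=
  stmt6_general k d m j r len Llen T P hlenm hm hj1 hP hocc hLmax
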